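/- arXiv:2305.15110 — 2 statements merged into one kernel-verified Lean document; each statement's English description precedes it below -/
import Mathlib

section
/- For every n ≥ 3 and 1 ≤ k < n/2, the co-spectrum of the generalized Petersen graph P(n, k), i.e., the set of all sizes of bonds of P(n,k), contains every integer from 3 to n + 2. -/
open SimpleGraph

/-- An edge-cut of `G`: a set of edges of `G` whose deletion disconnects `G`. -/
def IsEdgeCut {V : Type*} (G : SimpleGraph V) (S : Set (Sym2 V)) : Prop :=
  S ⊆ G.edgeSet ∧ ¬ (G.deleteEdges S).Connected

/-- A bond: a minimal nonempty edge-cut. -/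
def IsBond {V : Type*} (G : SimpleGraph V) (S : Set (Sym2 V)) : Prop :=
  S.Nonempty ∧ IsEdgeCut G S ∧ ∀ T ⊂ S, T.Nonempty → ¬ IsEdgeCut G T

/-- A largest bond: a bond of maximum size. -/
def IsLargestBond {V : Type*} (G : SimpleGraph V) (S : Set (Sym2 V)) : Prop :=
  IsBond G S ∧ ∀ T, IsBond G T → T.ncard ≤ S.ncard

/-- The set of edges of `G` between `X` and its complement. -/
def crossEdges {V : Type*} (G : SimpleGraph V) (X : Set V) : Set (Sym2 V) :=
  {e ∈ G.edgeSet | ∃ x ∈ X, ∃ y ∈ Xᶜ, e = s(x, y)}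

/-- `G` is 2-connected: at least 3 vertices and connected after deleting any ≤ 1 vertices. -/
def TwoConnected {V : Type*} (G : SimpleGraph V) : Prop :=
  3 ≤ Nat.card V ∧ ∀ s : Set V, s.ncard ≤ 1 → (G.induce sᶜ).Connected

/-- `G` is 3-connected: at least 4 vertices and connected after deleting any ≤ 2 vertices. -/
def ThreeConnected {V : Type*} (G : SimpleGraph V) : Prop :=
  4 ≤ Nat.card V ∧ ∀ s : Set V, s.ncard ≤ 2 → (G.induce sᶜ).Connected

/-- A longest cycle of `G`. -/
def IsLongestCycle {V : Type*} (G : SimpleGraph V) {v : V} (C : G.Walk v v) : Prop :=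
  C.IsCycle ∧ ∀ (u : V) (D : G.Walk u u), D.IsCycle → D.length ≤ C.length

/-- The generalized Petersen graph `P(n, k)`: outer vertices `Sum.inl i` ("xᵢ") and
inner vertices `Sum.inr i` ("yᵢ"), with edges `xᵢxᵢ₊₁`, `xᵢyᵢ`, `yᵢyᵢ₊ₖ` (indices mod n). -/
def GPetersen (n k : ℕ) : SimpleGraph (ZMod n ⊕ ZMod n) :=
  SimpleGraph.fromRel (fun a b =>
    (∃ i : ZMod n, a = Sum.inl i ∧ b = Sum.inl (i + 1)) ∨
    (∃ i : ZMod n, a = Sum.inl i ∧ b = Sum.inr i) ∨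
    (∃ i : ZMod n, a = Sum.inr i ∧ b = Sum.inr (i + (k : ZMod n))))

/-!
Let `d = gcd n k`; the inner edges `yᵢ yᵢ₊ₖ` split the inner vertices into the classes
`i mod d`, each a cycle. For `1 ≤ a < n` and `m ≤ d`, let `W` consist of `x₀, …, x_{a-1}` and all
inner vertices except `y_k, …, y_{k+m-1}`. When `d ≤ a`, `W` stays connected after cutting: the
predecessor `y_{w-k}` of a removed `y_w` on its cycle has `w - k < m ≤ d`, so it is the
representative `y_{w mod d}`; hence walking from any `yᵢ ∈ W` along its cycle reaches
`y_{i mod d}` before meeting a removed vertex, and a spoke joins `y_{i mod d}` to the outer path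
`x₀ … x_{a-1}`. When `m = 0` or `a ≤ k`, the complement is the outer path `x_a … x_{n-1}` with the
removed `yⱼ` attached by spokes. So the cut between `W` and its complement is a bond, made of
2 outer edges, `n - a - m` spokes and `2m` inner edges (distinct because `2k + d ≤ n`).
Taking `m = 0`, `d ≤ a < n` and then `a = d`, `1 ≤ m ≤ d` yields all sizes from `3` to `n + 2`.
-/

section CrossEdges

variable {V : Type*} {G : SimpleGraph V} {W : Set V}

theorem mem_crossEdges_iff {u v : V} :
    s(u, v) ∈ crossEdges G W ↔ G.Adj u v ∧ Xor (u ∈ W) (v ∈ W) := by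
  constructor
  · rintro ⟨hadj, x, hx, y, hy, hxy⟩
    rcases Sym2.eq_iff.mp hxy with ⟨rfl, rfl⟩ | ⟨rfl, rfl⟩
    · exact ⟨hadj, Or.inl ⟨hx, hy⟩⟩
    · exact ⟨hadj, Or.inr ⟨hx, hy⟩⟩
  · rintro ⟨hadj, ⟨hu, hv⟩ | ⟨hv, hu⟩⟩
    · exact ⟨hadj, u, hu, v, hv, rfl⟩
    · exact ⟨hadj, v, hv, u, hu, Sym2.eq_swap⟩

theorem xor_mem_congr {a b u v : V} (h : s(a, b) = s(u, v)) :
    Xor (a ∈ W) (b ∈ W) ↔ Xor (u ∈ W) (v ∈ W) := by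
  rcases Sym2.eq_iff.mp h with ⟨rfl, rfl⟩ | ⟨rfl, rfl⟩
  · rfl
  · exact (_root_.xor_comm _ _).to_iff

theorem ne_of_xor_mem {u v : V} (h : Xor (u ∈ W) (v ∈ W)) : u ≠ v := by
  rintro rfl
  simp at h

theorem deleteEdges_crossEdges_adj {u v : V} :
    (G.deleteEdges (crossEdges G W)).Adj u v ↔ G.Adj u v ∧ (u ∈ W ↔ v ∈ W) := by
  rw [deleteEdges_adj, mem_crossEdges_iff, xor_iff_not_iff]
  tauto

theorem mem_iff_of_reachable_deleteEdges_crossEdges {u v : V}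
    (h : (G.deleteEdges (crossEdges G W)).Reachable u v) : u ∈ W ↔ v ∈ W := by
  obtain ⟨p⟩ := h
  induction p with
  | nil => rfl
  | cons hadj _ ih => exact (deleteEdges_crossEdges_adj.mp hadj).2.trans ih

theorem reachable_deleteEdges_crossEdges_of_chain (f : ℕ → V) (N : ℕ)
    (hadj : ∀ t < N, G.Adj (f t) (f (t + 1))) (hside : ∀ t ≤ N, f t ∈ W ↔ f 0 ∈ W) :
    (G.deleteEdges (crossEdges G W)).Reachable (f 0) (f N) := by
  induction N with
  | zero => rfl
  | succ N ih =>
    refine (ih (fun t ht => hadj t (by omega)) (fun t ht => hside t (by omega))).trans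
      (deleteEdges_crossEdges_adj.mpr ⟨hadj N N.lt_succ_self, ?_⟩).reachable
    rw [hside N N.le_succ, hside (N + 1) le_rfl]

theorem isBond_crossEdges
    (hW : ∀ u ∈ W, ∀ v ∈ W, (G.deleteEdges (crossEdges G W)).Reachable u v)
    (hWc : ∀ u ∉ W, ∀ v ∉ W, (G.deleteEdges (crossEdges G W)).Reachable u v)
    (hne : (crossEdges G W).Nonempty) :
    IsBond G (crossEdges G W) := by
  refine ⟨hne, ⟨fun e he => he.1, fun hc => ?_⟩, ?_⟩
  · obtain ⟨-, -, x, hx, y, hy, -⟩ := hne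
    exact hy ((mem_iff_of_reachable_deleteEdges_crossEdges (hc.preconnected x y)).mp hx)
  rintro T hT - ⟨-, hTdis⟩
  obtain ⟨f, ⟨hf, x, hx, y, hy, rfl⟩, hfT⟩ := Set.exists_of_ssubset hT
  have hmono : G.deleteEdges (crossEdges G W) ≤ G.deleteEdges T := deleteEdges_anti hT.subset
  have hxy : (G.deleteEdges T).Adj x y := deleteEdges_adj.mpr ⟨hf, hfT⟩
  have hreach : ∀ u, (G.deleteEdges T).Reachable u x := fun u => by
    by_cases hu : u ∈ W
    · exact (hW u hu x hx).mono hmono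
    · exact ((hWc u hu y hy).mono hmono).trans hxy.symm.reachable
  exact hTdis (connected_iff _ |>.mpr ⟨fun u v => (hreach u).trans (hreach v).symm, ⟨x⟩⟩)

end CrossEdges

theorem Nat.two_mul_add_gcd_le {n k : ℕ} (h : 2 * k < n) : 2 * k + n.gcd k ≤ n := by
  have := Nat.le_of_dvd (by omega)
    (Nat.dvd_sub (Nat.gcd_dvd_left n k) ((Nat.gcd_dvd_right n k).mul_left 2))
  omega

namespace ZMod

variable {n : ℕ}

theorem natCast_ne_zero_of_pos_of_lt {c : ℕ} (h0 : 0 < c) (hc : c < n) : (c : ZMod n) ≠ 0 :=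
  (natCast_eq_zero_iff c n).not.mpr (Nat.not_dvd_of_pos_of_lt h0 hc)

variable [NeZero n]

theorem val_add_natCast_cases (i : ZMod n) {c : ℕ} (hc : c < n) :
    (i + c).val = i.val + c ∧ i.val + c < n ∨ (i + c).val + n = i.val + c ∧ n ≤ i.val + c := by
  have hc' : (c : ZMod n).val = c := val_natCast_of_lt hc
  rcases lt_or_ge (i.val + c) n with h | h
  · exact Or.inl ⟨by rw [val_add_of_lt (by rwa [hc']), hc'], h⟩
  · exact Or.inr ⟨by rw [val_add_of_le (by rwa [hc']), hc']; omega, h⟩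

theorem ncard_preimage_val (T : Finset ℕ) (hT : ∀ t ∈ T, t < n) :
    (val ⁻¹' (T : Set ℕ) : Set (ZMod n)).ncard = T.card := by
  rw [Set.ncard_preimage_of_injective_subset_range (val_injective n), Set.ncard_coe_finset]
  exact fun t ht => ⟨t, val_natCast_of_lt (hT t ht)⟩

theorem val_add_mul_natCast_mod {d k : ℕ} (hdn : d ∣ n) (hdk : d ∣ k) (i : ZMod n) (t : ℕ) :
    (i + t * k).val % d = i.val % d := by
  have hcast : i + t * k = ((i.val + t * k : ℕ) : ZMod n) := by push_cast [natCast_zmod_val]; rfl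
  obtain ⟨k', rfl⟩ := hdk
  rw [hcast, val_natCast, Nat.mod_mod_of_dvd _ hdn, mul_left_comm, Nat.add_mul_mod_self_left]

theorem exists_add_mul_natCast_eq_val_mod_gcd (i : ZMod n) (k : ℕ) :
    ∃ t : ℕ, i + t * k = ((i.val % n.gcd k : ℕ) : ZMod n) := by
  have hbezout : ((n.gcd k : ℕ) : ZMod n) = k * (Nat.gcdB n k : ZMod n) := by
    have := congrArg (Int.cast : ℤ → ZMod n) (Nat.gcd_eq_gcd_ab n k)
    push_cast [natCast_self] at this
    simpa using this
  set z : ZMod n := -((Nat.gcdB n k : ZMod n) * (i.val / n.gcd k : ℕ))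
  refine ⟨z.val, ?_⟩
  have hdiv := congrArg (Nat.cast : ℕ → ZMod n) (Nat.div_add_mod i.val (n.gcd k))
  push_cast [natCast_zmod_val] at hdiv
  rw [natCast_zmod_val]
  linear_combination ((i.val / n.gcd k : ℕ) : ZMod n) * hbezout - hdiv

end ZMod

namespace GPetersen

open Sum

variable {n k a m : ℕ}

def outerEdge (i : ZMod n) : Sym2 (ZMod n ⊕ ZMod n) := s(inl i, inl (i + 1))

def spokeEdge (i : ZMod n) : Sym2 (ZMod n ⊕ ZMod n) := s(inl i, inr i)

def innerEdge (k : ℕ) (i : ZMod n) : Sym2 (ZMod n ⊕ ZMod n) := s(inr i, inr (i + (k : ZMod n)))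

theorem adj_iff {u v : ZMod n ⊕ ZMod n} :
    (GPetersen n k).Adj u v ↔ u ≠ v ∧
      ((∃ i, outerEdge i = s(u, v)) ∨ (∃ i, spokeEdge i = s(u, v)) ∨
        ∃ i, innerEdge k i = s(u, v)) := by
  simp only [GPetersen, fromRel_adj, outerEdge, spokeEdge, innerEdge, Sym2.eq_iff]
  constructor
  · rintro ⟨hne, h | h⟩ <;> refine ⟨hne, ?_⟩ <;> aesop
  · rintro ⟨hne, h⟩; refine ⟨hne, ?_⟩; aesop

theorem crossEdges_eq (W : Set (ZMod n ⊕ ZMod n)) :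
    crossEdges (GPetersen n k) W =
      outerEdge '' {i | Xor (inl i ∈ W) (inl (i + 1) ∈ W)} ∪
        spokeEdge '' {i | Xor (inl i ∈ W) (inr i ∈ W)} ∪
        innerEdge k '' {i | Xor (inr i ∈ W) (inr (i + (k : ZMod n)) ∈ W)} := by
  ext e
  induction e using Sym2.ind with | _ u v => ?_
  rw [mem_crossEdges_iff, adj_iff]
  simp only [Set.mem_union, Set.mem_image, Set.mem_ofPred_eq]
  constructor
  · rintro ⟨⟨-, ⟨i, h⟩ | ⟨i, h⟩ | ⟨i, h⟩⟩, hx⟩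
    · exact Or.inl (Or.inl ⟨i, (xor_mem_congr h).mpr hx, h⟩)
    · exact Or.inl (Or.inr ⟨i, (xor_mem_congr h).mpr hx, h⟩)
    · exact Or.inr ⟨i, (xor_mem_congr h).mpr hx, h⟩
  · rintro ((⟨i, hx, h⟩ | ⟨i, hx, h⟩) | ⟨i, hx, h⟩) <;> have hx' := (xor_mem_congr h).mp hx
    · exact ⟨⟨ne_of_xor_mem hx', Or.inl ⟨i, h⟩⟩, hx'⟩
    · exact ⟨⟨ne_of_xor_mem hx', Or.inr (Or.inl ⟨i, h⟩)⟩, hx'⟩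
    · exact ⟨⟨ne_of_xor_mem hx', Or.inr (Or.inr ⟨i, h⟩)⟩, hx'⟩

theorem outerEdge_injective (h2 : (2 : ZMod n) ≠ 0) :
    Function.Injective (outerEdge (n := n)) := by
  intro i j h
  simp only [outerEdge, Sym2.eq_iff, inl.injEq] at h
  rcases h with ⟨h, -⟩ | ⟨h₁, h₂⟩
  · exact h
  · exact absurd (by linear_combination h₂ - h₁) h2

theorem spokeEdge_injective : Function.Injective (spokeEdge (n := n)) := by
  intro i j h
  simpa [spokeEdge] using h

theorem innerEdge_injective (h2k : 2 * (k : ZMod n) ≠ 0) :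
    Function.Injective (innerEdge (n := n) k) := by
  intro i j h
  simp only [innerEdge, Sym2.eq_iff, inr.injEq] at h
  rcases h with ⟨h, -⟩ | ⟨h₁, h₂⟩
  · exact h
  · exact absurd (by linear_combination h₂ - h₁) h2k

theorem ncard_crossEdges [NeZero n] (h2 : (2 : ZMod n) ≠ 0) (h2k : 2 * (k : ZMod n) ≠ 0)
    (W : Set (ZMod n ⊕ ZMod n)) :
    (crossEdges (GPetersen n k) W).ncard =
      {i | Xor (inl i ∈ W) (inl (i + 1) ∈ W)}.ncard + {i | Xor (inl i ∈ W) (inr i ∈ W)}.ncard +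
        {i | Xor (inr i ∈ W) (inr (i + (k : ZMod n)) ∈ W)}.ncard := by
  rw [crossEdges_eq, Set.ncard_union_eq, Set.ncard_union_eq,
    Set.ncard_image_of_injective _ (outerEdge_injective h2),
    Set.ncard_image_of_injective _ spokeEdge_injective,
    Set.ncard_image_of_injective _ (innerEdge_injective h2k)]
  · simp [Set.disjoint_left, outerEdge, spokeEdge]
  · simp only [Set.disjoint_left, Set.mem_union, Set.mem_image]
    rintro _ (⟨i, -, rfl⟩ | ⟨i, -, rfl⟩) ⟨j, -, h⟩ <;> simp [outerEdge, spokeEdge, innerEdge] at h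

theorem adj_inl_add_one (h1 : (1 : ZMod n) ≠ 0) (i : ZMod n) :
    (GPetersen n k).Adj (inl i) (inl (i + 1)) :=
  adj_iff.mpr ⟨by simpa using h1, Or.inl ⟨i, rfl⟩⟩

theorem adj_inl_inr (i : ZMod n) : (GPetersen n k).Adj (inl i) (inr i) :=
  adj_iff.mpr ⟨inl_ne_inr, Or.inr (Or.inl ⟨i, rfl⟩)⟩

theorem adj_inr_add (hk : (k : ZMod n) ≠ 0) (i : ZMod n) :
    (GPetersen n k).Adj (inr i) (inr (i + k)) :=
  adj_iff.mpr ⟨by simpa using hk, Or.inr (Or.inr ⟨i, rfl⟩)⟩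

section Chains

variable (W : Set (ZMod n ⊕ ZMod n))

theorem reachable_inl_add (h1 : (1 : ZMod n) ≠ 0) (i : ZMod n) (N : ℕ)
    (hside : ∀ t ≤ N, inl (i + t) ∈ W ↔ inl i ∈ W) :
    ((GPetersen n k).deleteEdges (crossEdges (GPetersen n k) W)).Reachable (inl i)
      (inl (i + N)) := by
  simpa using reachable_deleteEdges_crossEdges_of_chain (fun t => inl (i + t)) N
    (fun t _ => by simpa [add_assoc] using adj_inl_add_one h1 (i + t)) (by simpa using hside)

theorem reachable_inr_add_mul (hk : (k : ZMod n) ≠ 0) (i : ZMod n) (N : ℕ)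
    (hside : ∀ t ≤ N, inr (i + t * k) ∈ W ↔ inr i ∈ W) :
    ((GPetersen n k).deleteEdges (crossEdges (GPetersen n k) W)).Reachable (inr i)
      (inr (i + N * k)) := by
  simpa using reachable_deleteEdges_crossEdges_of_chain (fun t => inr (i + t * k)) N
    (fun t _ => by simpa [add_mul, add_assoc] using adj_inr_add hk (i + t * k))
    (by simpa using hside)

end Chains

def bondSide (n k a m : ℕ) : Set (ZMod n ⊕ ZMod n) :=
  Sum.elim (fun i => i.val < a) (fun i => ¬(k ≤ i.val ∧ i.val < k + m))

@[simp]
theorem inl_mem_bondSide {i : ZMod n} : inl i ∈ bondSide n k a m ↔ i.val < a := Iff.rfl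

@[simp]
theorem inr_mem_bondSide {i : ZMod n} :
    inr i ∈ bondSide n k a m ↔ ¬(k ≤ i.val ∧ i.val < k + m) := Iff.rfl

section BondSide

variable [NeZero n]

theorem ncard_outer_bondSide (ha : 1 ≤ a) (han : a < n) :
    {i : ZMod n | Xor (inl i ∈ bondSide n k a m) (inl (i + 1) ∈ bondSide n k a m)}.ncard = 2 := by
  have hset : {i : ZMod n | Xor (inl i ∈ bondSide n k a m) (inl (i + 1) ∈ bondSide n k a m)} =
      ZMod.val ⁻¹' ↑({a - 1, n - 1} : Finset ℕ) := by
    ext i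
    have := i.val_lt
    have hcases := i.val_add_natCast_cases (c := 1) (by omega)
    simp only [Nat.cast_one] at hcases
    simp only [Set.mem_ofPred_eq, inl_mem_bondSide, xor_def, Set.mem_preimage, Finset.coe_insert,
      Finset.coe_singleton, Set.mem_insert_iff, Set.mem_singleton_iff]
    omega
  rw [hset, ZMod.ncard_preimage_val _ (by simp; omega), Finset.card_pair (by omega)]

theorem ncard_spoke_bondSide (hkm : k + m ≤ n) (hm : m = 0 ∨ a ≤ k) :
    {i : ZMod n | Xor (inl i ∈ bondSide n k a m) (inr i ∈ bondSide n k a m)}.ncard =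
      n - a - m := by
  have hset : {i : ZMod n | Xor (inl i ∈ bondSide n k a m) (inr i ∈ bondSide n k a m)} =
      ZMod.val ⁻¹' ↑(Finset.Ico a n \ Finset.Ico k (k + m)) := by
    ext i
    have := i.val_lt
    simp only [Set.mem_ofPred_eq, inl_mem_bondSide, inr_mem_bondSide, xor_def, Set.mem_preimage,
      Finset.coe_sdiff, Set.mem_sdiff, Finset.coe_Ico, Set.mem_Ico]
    omega
  have hsub : Finset.Ico k (k + m) ⊆ Finset.Ico a n := by
    intro t
    simp only [Finset.mem_Ico]
    omega
  rw [hset, ZMod.ncard_preimage_val _ (by simp; omega), Finset.card_sdiff_of_subset hsub,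
    Nat.card_Ico, Nat.card_Ico, Nat.add_sub_cancel_left]

theorem ncard_inner_bondSide (hmk : m ≤ k) (hn : 2 * k + m ≤ n) :
    {i : ZMod n | Xor (inr i ∈ bondSide n k a m)
      (inr (i + (k : ZMod n)) ∈ bondSide n k a m)}.ncard = 2 * m := by
  have hset : {i : ZMod n | Xor (inr i ∈ bondSide n k a m)
      (inr (i + (k : ZMod n)) ∈ bondSide n k a m)} =
      ZMod.val ⁻¹' ↑(Finset.range m ∪ Finset.Ico k (k + m)) := by
    ext i
    have := i.val_lt
    have hcases := i.val_add_natCast_cases (c := k) (by omega)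
    simp only [Set.mem_ofPred_eq, inr_mem_bondSide, xor_def, Set.mem_preimage,
      Finset.coe_union, Finset.coe_range, Finset.coe_Ico, Set.mem_union, Set.mem_Iio, Set.mem_Ico]
    omega
  have hdisj : Disjoint (Finset.range m) (Finset.Ico k (k + m)) := by
    simp only [Finset.disjoint_left, Finset.mem_range, Finset.mem_Ico]
    omega
  rw [hset, ZMod.ncard_preimage_val _ (by simp; omega), Finset.card_union_of_disjoint hdisj,
    Finset.card_range, Nat.card_Ico]
  omega

theorem reachable_inl_zero_of_inl_mem_bondSide (h1 : (1 : ZMod n) ≠ 0) {j : ZMod n}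
    (hj : inl j ∈ bondSide n k a m) :
    ((GPetersen n k).deleteEdges (crossEdges (GPetersen n k) (bondSide n k a m))).Reachable
      (inl j) (inl 0) := by
  have hside (t : ℕ) (ht : t ≤ j.val) :
      inl (0 + (t : ZMod n)) ∈ bondSide n k a m ↔ inl 0 ∈ bondSide n k a m := by
    have := j.val_lt
    rw [inl_mem_bondSide] at hj
    simp only [zero_add, inl_mem_bondSide, ZMod.val_natCast_of_lt (ht.trans_lt this),
      ZMod.val_zero]
    omega
  simpa using (reachable_inl_add _ h1 0 j.val hside).symm

theorem inr_add_mul_mem_bondSide {d : ℕ} (hdn : d ∣ n) (hdk : d ∣ k) (hkn : k < n) (hm : m ≤ d)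
    {j : ZMod n} (hj : inr j ∈ bondSide n k a m) (t : ℕ)
    (ht : ∀ s < t, j + s * k ≠ ((j.val % d : ℕ) : ZMod n)) :
    inr (j + t * k) ∈ bondSide n k a m := by
  cases t with
  | zero => simpa using hj
  | succ s =>
    by_contra hout
    apply ht s s.lt_succ_self
    have hmod := ZMod.val_add_mul_natCast_mod hdn hdk j s
    set x := j + s * k
    have hx : j + (s + 1 : ℕ) * k = x + k := by push_cast; ring
    rw [hx, inr_mem_bondSide, not_not] at hout
    have hxm : x.val < m := by
      have := x.val_lt
      rcases x.val_add_natCast_cases hkn with h | h <;> omega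
    rw [← hmod, Nat.mod_eq_of_lt (by omega), ZMod.natCast_zmod_val]

theorem reachable_inl_zero_of_mem_bondSide (h1 : (1 : ZMod n) ≠ 0) (hk : (k : ZMod n) ≠ 0)
    (hkn : k < n) (hda : n.gcd k ≤ a) (hm : m ≤ n.gcd k) {v : ZMod n ⊕ ZMod n}
    (hv : v ∈ bondSide n k a m) :
    ((GPetersen n k).deleteEdges (crossEdges (GPetersen n k) (bondSide n k a m))).Reachable
      v (inl 0) := by
  rcases v with j | j
  · exact reachable_inl_zero_of_inl_mem_bondSide h1 hv
  have hex := ZMod.exists_add_mul_natCast_eq_val_mod_gcd j k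
  have hchain := reachable_inr_add_mul (bondSide n k a m) hk j (Nat.find hex) fun t ht =>
    iff_of_true (inr_add_mul_mem_bondSide (Nat.gcd_dvd_left n k) (Nat.gcd_dvd_right n k)
      hkn hm hv t fun s hs => Nat.find_min hex (hs.trans_le ht)) hv
  rw [Nat.find_spec hex] at hchain
  have hdk : n.gcd k ≤ k :=
    Nat.le_of_dvd (Nat.pos_of_ne_zero (by rintro rfl; simp at hk)) (Nat.gcd_dvd_right n k)
  have hr : j.val % n.gcd k < n.gcd k := Nat.mod_lt _ (Nat.gcd_pos_of_pos_left _ (NeZero.pos n))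
  have hrval : ((j.val % n.gcd k : ℕ) : ZMod n).val = j.val % n.gcd k :=
    ZMod.val_natCast_of_lt (by have := j.val_lt; have := Nat.mod_le j.val (n.gcd k); omega)
  have hspoke := deleteEdges_crossEdges_adj (W := bondSide n k a m) |>.mpr
    ⟨(adj_inl_inr (k := k) ((j.val % n.gcd k : ℕ) : ZMod n)).symm, by simp [hrval]; omega⟩
  exact hchain.trans <| hspoke.reachable.trans <|
    reachable_inl_zero_of_inl_mem_bondSide h1 (by simp [hrval]; omega)

theorem reachable_inl_of_inl_not_mem_bondSide (h1 : (1 : ZMod n) ≠ 0) {j : ZMod n}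
    (hj : inl j ∉ bondSide n k a m) :
    ((GPetersen n k).deleteEdges (crossEdges (GPetersen n k) (bondSide n k a m))).Reachable
      (inl j) (inl a) := by
  have hjn := j.val_lt
  rw [inl_mem_bondSide, not_lt] at hj
  have hside (t : ℕ) (ht : t ≤ j.val - a) :
      inl ((a : ZMod n) + t) ∈ bondSide n k a m ↔ inl (a : ZMod n) ∈ bondSide n k a m := by
    simp only [inl_mem_bondSide, ← Nat.cast_add, ZMod.val_natCast_of_lt (by omega : a + t < n),
      ZMod.val_natCast_of_lt (by omega : a < n)]
    omega
  have := (reachable_inl_add (k := k) _ h1 a (j.val - a) hside).symm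
  rwa [← Nat.cast_add, Nat.add_sub_cancel' hj, ZMod.natCast_zmod_val] at this

theorem reachable_inl_of_not_mem_bondSide (h1 : (1 : ZMod n) ≠ 0) (hm : m = 0 ∨ a ≤ k)
    {v : ZMod n ⊕ ZMod n} (hv : v ∉ bondSide n k a m) :
    ((GPetersen n k).deleteEdges (crossEdges (GPetersen n k) (bondSide n k a m))).Reachable
      v (inl a) := by
  rcases v with j | j
  · exact reachable_inl_of_inl_not_mem_bondSide h1 hv
  have hj : inl j ∉ bondSide n k a m := by simp only [inr_mem_bondSide] at hv; simp; omega
  have hspoke := deleteEdges_crossEdges_adj (W := bondSide n k a m) |>.mpr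
    ⟨(adj_inl_inr (k := k) j).symm, iff_of_false hv hj⟩
  exact hspoke.reachable.trans (reachable_inl_of_inl_not_mem_bondSide h1 hj)

end BondSide

end GPetersen

open GPetersen in
/-- the co-spectrum of `P(n,k)` contains every integer from `3` to `n + 2`. -/
theorem gPetersen_cospectrum_contains (n k : ℕ) (hn : 3 ≤ n) (hk1 : 1 ≤ k)
    (hk2 : 2 * k < n) :
    ∀ s : ℕ, 3 ≤ s → s ≤ n + 2 →
      ∃ B : Set (Sym2 (ZMod n ⊕ ZMod n)), IsBond (GPetersen n k) B ∧ B.ncard = s := by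
  intro s hs3 hs
  have : NeZero n := ⟨by omega⟩
  have h1 : (1 : ZMod n) ≠ 0 := by
    exact_mod_cast ZMod.natCast_ne_zero_of_pos_of_lt one_pos (by omega)
  have h2 : (2 : ZMod n) ≠ 0 := by
    exact_mod_cast ZMod.natCast_ne_zero_of_pos_of_lt two_pos (by omega)
  have hk : (k : ZMod n) ≠ 0 := ZMod.natCast_ne_zero_of_pos_of_lt hk1 (by omega)
  have h2k : 2 * (k : ZMod n) ≠ 0 := by
    exact_mod_cast ZMod.natCast_ne_zero_of_pos_of_lt (by omega) hk2
  have hdk : n.gcd k ≤ k := Nat.le_of_dvd hk1 (Nat.gcd_dvd_right n k)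
  have hd : 0 < n.gcd k := Nat.gcd_pos_of_pos_right n hk1
  have h2kd := Nat.two_mul_add_gcd_le hk2
  obtain ⟨a, m, ha, hda, han, hm, hmk, rfl⟩ : ∃ a m, 1 ≤ a ∧ n.gcd k ≤ a ∧ a < n ∧
      m ≤ n.gcd k ∧ (m = 0 ∨ a ≤ k) ∧ n - a + m + 2 = s := by
    by_cases h : s ≤ n - n.gcd k + 2
    · exact ⟨n + 2 - s, 0, by omega, by omega, by omega, by omega, by omega, by omega⟩
    · exact ⟨n.gcd k, s - (n - n.gcd k + 2), by omega, le_rfl, by omega, by omega, by omega,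
        by omega⟩
  have hcard : (crossEdges (GPetersen n k) (bondSide n k a m)).ncard = n - a + m + 2 := by
    rw [ncard_crossEdges h2 h2k, ncard_outer_bondSide ha han, ncard_spoke_bondSide (by omega) hmk,
      ncard_inner_bondSide (by omega) (by omega)]
    omega
  refine ⟨_, isBond_crossEdges (fun u hu v hv => ?_) (fun u hu v hv => ?_)
    (Set.nonempty_of_ncard_ne_zero (by omega)), hcard⟩
  · exact (reachable_inl_zero_of_mem_bondSide h1 hk (by omega) hda hm hu).trans
      (reachable_inl_zero_of_mem_bondSide h1 hk (by omega) hda hm hv).symm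
  · exact (reachable_inl_of_not_mem_bondSide h1 hmk hu).trans
      (reachable_inl_of_not_mem_bondSide h1 hmk hv).symm
end

section
/- Let G be a simple 3-connected graph with n vertices and m edges such that every longest cycle of G is disjoint (in edges) from some largest bond [X,Y] with the cycle contained in G[X]. If the largest bond has size m - n + 2, then G[X] and G[Y] are both trees, contradicting that G[X] contains a cycle; hence c*(G) = m - n + 2 implies every longest cycle meets every largest bond. -/
open SimpleGraph

section Helpers

variable {V : Type*} {G : SimpleGraph V} {X : Set V}

/-- Transfer a walk whose support lies in `X` to the induced graph on `X`. -/
def walkInduce : ∀ {u v : V} (p : G.Walk u v) (h : ∀ w ∈ p.support, w ∈ X),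
    (G.induce X).Walk ⟨u, h u p.start_mem_support⟩ ⟨v, h v p.end_mem_support⟩
  | _, _, SimpleGraph.Walk.nil, _ => SimpleGraph.Walk.nil
  | _, _, SimpleGraph.Walk.cons ha p, h =>
      SimpleGraph.Walk.cons (by exact ha)
        (walkInduce p (fun w hw => h w (by simp [SimpleGraph.Walk.support_cons, hw])))

lemma walkInduce_map : ∀ {u v : V} (p : G.Walk u v) (h : ∀ w ∈ p.support, w ∈ X),
    ((walkInduce p h).map (SimpleGraph.Embedding.induce X).toHom) = p
  | _, _, SimpleGraph.Walk.nil, _ => rfl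
  | _, _, SimpleGraph.Walk.cons ha p, h => by
      simp only [walkInduce, SimpleGraph.Walk.map_cons, walkInduce_map]
      exact congrArg (SimpleGraph.Walk.cons ha) (walkInduce_map p _)

end Helpers

section Helpers2

variable {V : Type*} {G : SimpleGraph V} {X : Set V}

lemma isCycle_walkInduce {v : V} (p : G.Walk v v) (hp : p.IsCycle)
    (h : ∀ w ∈ p.support, w ∈ X) : ((walkInduce p h).IsCycle) := by
  have hinj : Function.Injective ((SimpleGraph.Embedding.induce X : G.induce X ↪g G).toHom) :=
    RelEmbedding.injective _
  rw [← SimpleGraph.Walk.map_isCycle_iff_of_injective hinj, walkInduce_map]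
  exact hp

lemma reachable_induce_of_walk {u v : V} (p : G.Walk u v) (h : ∀ w ∈ p.support, w ∈ X)
    (hu : u ∈ X) (hv : v ∈ X) :
    (G.induce X).Reachable ⟨u, hu⟩ ⟨v, hv⟩ := ⟨walkInduce p h⟩

end Helpers2

section Counting

variable {W : Type*}

lemma delete_edge_connected {H : SimpleGraph W} (hc : H.Connected) {e : Sym2 W}
    (he : e ∈ H.edgeSet) (hnb : ¬H.IsBridge e) : (H \ fromEdgeSet {e}).Connected := by
  induction e with
  | h a b =>
    rw [SimpleGraph.isBridge_iff] at hnb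
    push_neg at hnb
    have hreach : (H \ fromEdgeSet {s(a, b)}).Reachable a b := hnb
    have key : ∀ {u w : W}, H.Walk u w → (H \ fromEdgeSet {s(a, b)}).Reachable u w := by
      intro u w p
      induction p with
      | nil => exact SimpleGraph.Reachable.refl _
      | @cons x y z hadj q ih =>
        refine SimpleGraph.Reachable.trans ?_ ih
        by_cases hxy : s(x, y) = s(a, b)
        · rcases Sym2.eq_iff.mp hxy with ⟨rfl, rfl⟩ | ⟨rfl, rfl⟩
          · exact hreach
          · exact hreach.symm
        · refine SimpleGraph.Adj.reachable ?_
          rw [SimpleGraph.sdiff_adj, SimpleGraph.fromEdgeSet_adj]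
          exact ⟨hadj, by simp [hxy]⟩
    haveI := hc.nonempty
    exact SimpleGraph.Connected.mk (fun u w => (hc.preconnected u w).elim (fun p => key p))

lemma exists_connected_smaller {H : SimpleGraph W} [Fintype W] (hc : H.Connected)
    (hac : ¬H.IsAcyclic) :
    ∃ H' : SimpleGraph W, H'.Connected ∧ H'.edgeSet.ncard + 1 = H.edgeSet.ncard := by
  unfold SimpleGraph.IsAcyclic at hac
  push_neg at hac
  obtain ⟨v, c, hcyc⟩ := hac
  have hne : c.edges ≠ [] := by
    intro h
    have h3 := hcyc.three_le_length
    rw [← SimpleGraph.Walk.length_edges, h, List.length_nil] at h3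
    omega
  set e := c.edges.head hne with hedef
  have hec : e ∈ c.edges := List.head_mem hne
  have heE : e ∈ H.edgeSet := c.edges_subset_edgeSet hec
  have hnb : ¬H.IsBridge e := by
    intro hb
    exact (SimpleGraph.isBridge_iff_forall_cycle_notMem heE).mp hb c hcyc hec
  refine ⟨H \ fromEdgeSet {e}, delete_edge_connected hc heE hnb, ?_⟩
  have hE : (H \ fromEdgeSet {e}).edgeSet = H.edgeSet \ {e} := by
    rw [SimpleGraph.edgeSet_sdiff, SimpleGraph.edgeSet_fromEdgeSet]
    ext d
    simp only [Set.mem_diff, Set.mem_singleton_iff, Set.mem_setOf_eq, not_and, not_not]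
    constructor
    · rintro ⟨hd, h2⟩
      refine ⟨hd, fun hde => ?_⟩
      exact H.not_isDiag_of_mem_edgeSet hd (h2 hde)
    · rintro ⟨hd, h2⟩
      exact ⟨hd, fun hde => absurd hde h2⟩
  rw [hE]
  have hfin : H.edgeSet.Finite := Set.toFinite _
  rw [Set.ncard_diff_singleton_of_mem heE]
  have : 1 ≤ H.edgeSet.ncard := by
    exact (Set.ncard_pos hfin).mpr ⟨e, heE⟩
  omega

lemma connected_card_le [Fintype W] (H : SimpleGraph W) (hc : H.Connected) :
    Fintype.card W ≤ H.edgeSet.ncard + 1 := by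
  classical
  suffices h : ∀ (n : ℕ) (H : SimpleGraph W), H.Connected → H.edgeSet.ncard = n →
      Fintype.card W ≤ n + 1 from h _ H hc rfl
  intro n
  induction n using Nat.strong_induction_on with
  | _ n ih =>
    intro H hc hn
    by_cases hac : H.IsAcyclic
    · haveI : Fintype H.edgeSet := H.edgeSet.toFinite.fintype
      have h1 : H.edgeFinset.card + 1 = Fintype.card W := SimpleGraph.IsTree.card_edgeFinset ⟨hc, hac⟩
      have h2 : H.edgeSet.ncard = H.edgeFinset.card := Set.ncard_eq_toFinset_card' _
      omega
    · obtain ⟨H', hc', hcard⟩ := exists_connected_smaller hc hac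
      have hlt : H'.edgeSet.ncard < n := by omega
      have := ih _ hlt H' hc' rfl
      omega

lemma isTree_of_connected_of_card [Fintype W] (H : SimpleGraph W) (hc : H.Connected)
    (hcard : H.edgeSet.ncard + 1 = Fintype.card W) : H.IsTree := by
  refine ⟨hc, ?_⟩
  by_contra hac
  obtain ⟨H', hc', hcard'⟩ := exists_connected_smaller hc hac
  have := connected_card_le H' hc'
  omega

end Counting

section Bond

variable {V : Type*} {G : SimpleGraph V} {X : Set V}

lemma crossEdges_subset (G : SimpleGraph V) (X : Set V) : crossEdges G X ⊆ G.edgeSet :=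
  fun _ he => he.1

lemma mem_crossEdges (h : G.Adj x y) (hx : x ∈ X) (hy : y ∉ X) : s(x, y) ∈ crossEdges G X :=
  ⟨h, x, hx, y, hy, rfl⟩

lemma mem_crossEdges' (h : G.Adj x y) (hx : x ∉ X) (hy : y ∈ X) : s(x, y) ∈ crossEdges G X :=
  ⟨h, y, hy, x, hx, Sym2.eq_swap.symm⟩

lemma cross_disconnects (G : SimpleGraph V) (hX : X.Nonempty) (hXc : Xᶜ.Nonempty) :
    ¬(G.deleteEdges (crossEdges G X)).Connected := by
  intro h
  obtain ⟨x, hx⟩ := hX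
  obtain ⟨y, hy⟩ := hXc
  obtain ⟨p⟩ := h.preconnected x y
  obtain ⟨d, _, hd1, hd2⟩ := p.exists_boundary_dart X hx hy
  have hadj := d.adj
  rw [SimpleGraph.deleteEdges_adj] at hadj
  exact hadj.2 (mem_crossEdges hadj.1 hd1 hd2)

lemma crossEdges_nonempty (hG : G.Connected) (hX : X.Nonempty) (hXc : Xᶜ.Nonempty) :
    (crossEdges G X).Nonempty := by
  obtain ⟨x, hx⟩ := hX
  obtain ⟨y, hy⟩ := hXc
  obtain ⟨p⟩ := hG.preconnected x y
  obtain ⟨d, _, hd1, hd2⟩ := p.exists_boundary_dart X hx hy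
  exact ⟨s(d.fst, d.snd), mem_crossEdges d.adj hd1 hd2⟩

lemma bond_eq_cross {B : Set (Sym2 V)} (hG : G.Connected) (hB : IsBond G B)
    (hsub : crossEdges G X ⊆ B) (hX : X.Nonempty) (hXc : Xᶜ.Nonempty) :
    B = crossEdges G X := by
  have hcut : IsEdgeCut G (crossEdges G X) :=
    ⟨crossEdges_subset G X, cross_disconnects G hX hXc⟩
  by_contra hne'
  exact hB.2.2 (crossEdges G X) (ssubset_of_subset_of_ne hsub (fun h => hne' h.symm))
    (crossEdges_nonempty hG hX hXc) hcut

end Bond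

section Structure

variable {V : Type*} {G : SimpleGraph V}

lemma bond_structure (hG : G.Connected) {B : Set (Sym2 V)} (hB : IsBond G B) :
    ∃ X : Set V, B = crossEdges G X ∧ (G.induce X).Connected ∧ (G.induce Xᶜ).Connected := by
  classical
  set G' := G.deleteEdges B with hG'def
  have hle : G' ≤ G := SimpleGraph.deleteEdges_le B
  have hncon : ¬G'.Connected := hB.2.1.2
  haveI hnonempty : Nonempty V := hG.nonempty
  have hnpre : ¬G'.Preconnected := fun h => hncon ⟨h⟩
  rw [SimpleGraph.Preconnected] at hnpre
  push_neg at hnpre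
  obtain ⟨x₀, y₀, hxy⟩ := hnpre
  set X := {w | G'.Reachable x₀ w} with hXdef
  have hx₀ : x₀ ∈ X := SimpleGraph.Reachable.refl _
  have hy₀ : y₀ ∈ Xᶜ := hxy
  -- cross edges of a `G'`-reachability class are contained in B
  have hsubgen : ∀ z : V, crossEdges G {w | G'.Reachable z w} ⊆ B := by
    rintro z e ⟨he, x, hx, y, hy, rfl⟩
    by_contra heB
    exact hy (hx.trans (SimpleGraph.Adj.reachable
      (SimpleGraph.deleteEdges_adj.mpr ⟨(G.mem_edgeSet).mp he, heB⟩)))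
  have hBX : B = crossEdges G X := bond_eq_cross hG hB (hsubgen x₀) ⟨x₀, hx₀⟩ ⟨y₀, hy₀⟩
  -- every vertex outside X also determines the bond
  have hcomp : ∀ u, u ∉ X → B = crossEdges G {w | G'.Reachable u w} := by
    intro u hu
    refine bond_eq_cross hG hB (hsubgen u) ⟨u, SimpleGraph.Reachable.refl _⟩ ⟨x₀, ?_⟩
    intro h
    exact hu (SimpleGraph.Reachable.symm h)
  -- edges of G with both ends on the same side of X are edges of G'
  have hinside : ∀ {a b : V}, G.Adj a b → ((a ∈ X ∧ b ∈ X) ∨ (a ∉ X ∧ b ∉ X)) → G'.Adj a b := by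
    rintro a b hab hside
    rw [SimpleGraph.deleteEdges_adj]
    refine ⟨hab, fun hmem => ?_⟩
    rw [hBX] at hmem
    obtain ⟨_, x, hx, y, hy, hxy⟩ := hmem
    rcases Sym2.eq_iff.mp hxy.symm with ⟨rfl, rfl⟩ | ⟨rfl, rfl⟩ <;>
      rcases hside with ⟨h1, h2⟩ | ⟨h1, h2⟩ <;> first | exact hy h2 | exact hy h1 | exact h1 hx | exact h2 hx
  -- X side connected
  have hXconn : (G.induce X).Connected := by
    haveI : Nonempty ↥X := ⟨⟨x₀, hx₀⟩⟩
    refine SimpleGraph.Connected.mk ?_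
    rintro ⟨u, hu⟩ ⟨v, hv⟩
    obtain ⟨p⟩ : G'.Reachable u v := (SimpleGraph.Reachable.symm hu).trans hv
    have hq : ∀ e ∈ p.edges, e ∈ G.edgeSet := fun e he =>
      SimpleGraph.edgeSet_mono hle (p.edges_subset_edgeSet he)
    have hsupp : ∀ w ∈ (p.transfer G hq).support, w ∈ X := by
      intro w hw
      rw [SimpleGraph.Walk.support_transfer] at hw
      exact hu.trans (p.takeUntil w hw).reachable
    exact reachable_induce_of_walk (p.transfer G hq) hsupp hu hv
  -- Xᶜ side: any two vertices outside X are G'-reachable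
  have hreach2 : ∀ u v, u ∈ Xᶜ → v ∈ Xᶜ → G'.Reachable u v := by
    intro u v hu hv
    by_contra hnr
    have hBY := hcomp u hu
    have hBZ := hcomp v hv
    obtain ⟨e, heB⟩ := hB.1
    have heX : e ∈ crossEdges G X := hBX ▸ heB
    have heY : e ∈ crossEdges G {w | G'.Reachable u w} := hBY ▸ heB
    have heZ : e ∈ crossEdges G {w | G'.Reachable v w} := hBZ ▸ heB
    obtain ⟨_, x, hx, y, hy, rfl⟩ := heX
    obtain ⟨_, a, ha, b, hb, hab⟩ := heY
    obtain ⟨_, c, hc, d, hd, hcd⟩ := heZ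
    have hxY : x ∉ {w | G'.Reachable u w} := fun h => hu (hx.trans (SimpleGraph.Reachable.symm h))
    have hxZ : x ∉ {w | G'.Reachable v w} := fun h => hv (hx.trans (SimpleGraph.Reachable.symm h))
    have hyY : y ∈ {w | G'.Reachable u w} := by
      rcases Sym2.eq_iff.mp hab.symm with ⟨rfl, rfl⟩ | ⟨rfl, rfl⟩
      · exact absurd ha hxY
      · exact ha
    have hyZ : y ∈ {w | G'.Reachable v w} := by
      rcases Sym2.eq_iff.mp hcd.symm with ⟨rfl, rfl⟩ | ⟨rfl, rfl⟩
      · exact absurd hc hxZ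
      · exact hc
    exact hnr (hyY.trans (SimpleGraph.Reachable.symm hyZ))
  have hXcconn : (G.induce Xᶜ).Connected := by
    haveI : Nonempty ↥(Xᶜ) := ⟨⟨y₀, hy₀⟩⟩
    refine SimpleGraph.Connected.mk ?_
    rintro ⟨u, hu⟩ ⟨v, hv⟩
    obtain ⟨p⟩ := hreach2 u v hu hv
    have hq : ∀ e ∈ p.edges, e ∈ G.edgeSet := fun e he =>
      SimpleGraph.edgeSet_mono hle (p.edges_subset_edgeSet he)
    have hsupp : ∀ w ∈ (p.transfer G hq).support, w ∈ Xᶜ := by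
      intro w hw
      rw [SimpleGraph.Walk.support_transfer] at hw
      intro hwX
      exact hu (hwX.trans (SimpleGraph.Reachable.symm (p.takeUntil w hw).reachable))
    exact reachable_induce_of_walk (p.transfer G hq) hsupp hu hv
  exact ⟨X, hBX, hXconn, hXcconn⟩

end Structure

section Partition

variable {V : Type*}

/-- Edges with both endpoints in `X`. -/
def insideEdges (G : SimpleGraph V) (X : Set V) : Set (Sym2 V) :=
  {e ∈ G.edgeSet | ∃ x ∈ X, ∃ y ∈ X, e = s(x, y)}

lemma edgeSet_eq_partition (G : SimpleGraph V) (X : Set V) :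
    G.edgeSet = (insideEdges G X ∪ insideEdges G Xᶜ) ∪ crossEdges G X := by
  ext e
  induction e with
  | h a b =>
    constructor
    · intro he
      have hab : G.Adj a b := (G.mem_edgeSet).mp he
      by_cases ha : a ∈ X <;> by_cases hb : b ∈ X
      · exact Or.inl (Or.inl ⟨he, a, ha, b, hb, rfl⟩)
      · exact Or.inr (mem_crossEdges hab ha hb)
      · exact Or.inr (mem_crossEdges' hab ha hb)
      · exact Or.inl (Or.inr ⟨he, a, ha, b, hb, rfl⟩)
    · rintro ((h | h) | h) <;> exact h.1

lemma insideEdges_disjoint_cross (G : SimpleGraph V) (X : Set V) :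
    Disjoint (insideEdges G X) (crossEdges G X) := by
  rw [Set.disjoint_left]
  rintro e ⟨_, x, hx, y, hy, rfl⟩ ⟨_, c, hc, d, hd, hcd⟩
  rcases Sym2.eq_iff.mp hcd.symm with ⟨rfl, rfl⟩ | ⟨rfl, rfl⟩
  · exact hd hy
  · exact hd hx

lemma insideEdges_compl_disjoint_cross (G : SimpleGraph V) (X : Set V) :
    Disjoint (insideEdges G Xᶜ) (crossEdges G X) := by
  rw [Set.disjoint_left]
  rintro e ⟨_, x, hx, y, hy, rfl⟩ ⟨_, c, hc, d, hd, hcd⟩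
  rcases Sym2.eq_iff.mp hcd.symm with ⟨rfl, rfl⟩ | ⟨rfl, rfl⟩
  · exact hx hc
  · exact hy hc

lemma insideEdges_disjoint_insideEdges_compl (G : SimpleGraph V) (X : Set V) :
    Disjoint (insideEdges G X) (insideEdges G Xᶜ) := by
  rw [Set.disjoint_left]
  rintro e ⟨_, x, hx, y, hy, rfl⟩ ⟨_, c, hc, d, hd, hcd⟩
  rcases Sym2.eq_iff.mp hcd.symm with ⟨rfl, rfl⟩ | ⟨rfl, rfl⟩
  · exact hc hx
  · exact hd hx

lemma insideEdges_eq_image (G : SimpleGraph V) (X : Set V) :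
    insideEdges G X = (Sym2.map (Subtype.val : X → V)) '' (G.induce X).edgeSet := by
  ext e
  constructor
  · rintro ⟨he, x, hx, y, hy, rfl⟩
    refine ⟨s((⟨x, hx⟩ : X), (⟨y, hy⟩ : X)), ?_, rfl⟩
    exact (G.mem_edgeSet).mp he
  · rintro ⟨e', he', rfl⟩
    induction e' with
    | h u w =>
      have : G.Adj u.val w.val := he'
      exact ⟨this, u.val, u.property, w.val, w.property, rfl⟩

lemma insideEdges_ncard (G : SimpleGraph V) (X : Set V) :
    (insideEdges G X).ncard = (G.induce X).edgeSet.ncard := by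
  rw [insideEdges_eq_image,
    Set.ncard_image_of_injective _ (Sym2.map.injective Subtype.val_injective)]

end Partition

section Part1

variable {V : Type*} [Fintype V]

lemma part1_aux (G : SimpleGraph V) (X : Set V)
    (hX : (G.induce X).Connected) (hXc : (G.induce Xᶜ).Connected)
    (hcount : (crossEdges G X).ncard + Nat.card V = G.edgeSet.ncard + 2) :
    (G.induce X).IsTree ∧ (G.induce Xᶜ).IsTree := by
  classical
  haveI : Fintype ↥X := X.toFinite.fintype
  haveI : Fintype ↥(Xᶜ) := (Xᶜ).toFinite.fintype
  have hcX : Fintype.card ↥X = X.ncard := by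
    rw [Set.ncard_eq_toFinset_card', Set.toFinset_card]
  have hcXc : Fintype.card ↥(Xᶜ) = (Xᶜ).ncard := by
    rw [Set.ncard_eq_toFinset_card', Set.toFinset_card]
  have hsum : X.ncard + (Xᶜ).ncard = Nat.card V := Set.ncard_add_ncard_compl X
  have hm : G.edgeSet.ncard =
      (insideEdges G X).ncard + (insideEdges G Xᶜ).ncard + (crossEdges G X).ncard := by
    rw [edgeSet_eq_partition G X,
      Set.ncard_union_eq (Set.disjoint_union_left.mpr
        ⟨insideEdges_disjoint_cross G X, insideEdges_compl_disjoint_cross G X⟩)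
        (Set.toFinite _) (Set.toFinite _),
      Set.ncard_union_eq (insideEdges_disjoint_insideEdges_compl G X)
        (Set.toFinite _) (Set.toFinite _)]
  have hineq1 : Fintype.card ↥X ≤ (G.induce X).edgeSet.ncard + 1 :=
    connected_card_le _ hX
  have hineq2 : Fintype.card ↥(Xᶜ) ≤ (G.induce Xᶜ).edgeSet.ncard + 1 :=
    connected_card_le _ hXc
  have hiX := insideEdges_ncard G X
  have hiXc := insideEdges_ncard G Xᶜ
  have heq1 : (G.induce X).edgeSet.ncard + 1 = Fintype.card ↥X := by omega
  have heq2 : (G.induce Xᶜ).edgeSet.ncard + 1 = Fintype.card ↥(Xᶜ) := by omega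
  exact ⟨isTree_of_connected_of_card _ hX heq1, isTree_of_connected_of_card _ hXc heq2⟩

end Part1

lemma ThreeConnected.connected' {V : Type*} {G : SimpleGraph V} (h3 : ThreeConnected G) :
    G.Connected := by
  have h := h3.2 ∅ (by simp)
  rw [Set.compl_empty] at h
  exact ((induceUnivIso G).connected_iff).mp h

/-- in a 3-connected graph, a largest bond `[X, Y]` of size `m - n + 2` has both
sides inducing trees; hence if the largest bond size equals `m - n + 2`, every longest cycle
meets every largest bond. -/
theorem dual_hamiltonian_case {V : Type*} [Fintype V] (G : SimpleGraph V)
    (h3 : ThreeConnected G) :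
    (∀ X : Set V, (G.induce X).Connected → (G.induce Xᶜ).Connected →
        IsLargestBond G (crossEdges G X) →
        (crossEdges G X).ncard + Nat.card V = G.edgeSet.ncard + 2 →
        (G.induce X).IsTree ∧ (G.induce Xᶜ).IsTree) ∧
    ((∃ B₀ : Set (Sym2 V), IsLargestBond G B₀ ∧
        B₀.ncard + Nat.card V = G.edgeSet.ncard + 2) →
      ∀ (v : V) (C : G.Walk v v), IsLongestCycle G C →
        ∀ B : Set (Sym2 V), IsLargestBond G B → ∃ e ∈ C.edges, e ∈ B) := by
  constructor
  · intro X hX hXc _ hcount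
    exact part1_aux G X hX hXc hcount
  · rintro ⟨B₀, hB₀, hB₀c⟩ v C hC B hB
    classical
    by_contra hmiss
    push_neg at hmiss
    have hGc : G.Connected := h3.connected'
    obtain ⟨X, hBX, hXconn, hXcconn⟩ := bond_structure hGc hB.1
    have hcard : B.ncard = B₀.ncard := le_antisymm (hB₀.2 B hB.1) (hB.2 B₀ hB₀.1)
    have hcount : (crossEdges G X).ncard + Nat.card V = G.edgeSet.ncard + 2 := by
      rw [← hBX, hcard]; exact hB₀c
    obtain ⟨hT1, hT2⟩ := part1_aux G X hXconn hXcconn hcount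
    set G' := G.deleteEdges B with hG'def
    have hedges : ∀ e ∈ C.edges, e ∈ G'.edgeSet := by
      intro e he
      rw [hG'def, SimpleGraph.edgeSet_deleteEdges]
      exact ⟨C.edges_subset_edgeSet he, hmiss e he⟩
    set C' := C.transfer G' hedges with hC'def
    have hC'cyc : C'.IsCycle := hC.1.transfer hedges
    -- the cycle stays within X or within Xᶜ
    have hside : ∀ w ∈ C'.support, w ∈ X → ∀ w' ∈ C'.support, w' ∈ X := by
      intro w hw hwX w' hw' 
      by_contra hw'X
      obtain ⟨p⟩ : G'.Reachable w w' :=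
        ((C'.takeUntil w hw).reverse.append (C'.takeUntil w' hw')).reachable
      obtain ⟨d, _, hd1, hd2⟩ := p.exists_boundary_dart X hwX hw'X
      have hadj : G.Adj d.toProd.1 d.toProd.2 ∧ s(d.toProd.1, d.toProd.2) ∉ B :=
        SimpleGraph.deleteEdges_adj.mp d.adj
      exact hadj.2 (hBX ▸ mem_crossEdges hadj.1 hd1 hd2)
    have hsupp : (∀ w ∈ C'.support, w ∈ X) ∨ (∀ w ∈ C'.support, w ∈ Xᶜ) := by
      by_cases hv : v ∈ X
      · exact Or.inl (hside v C'.start_mem_support hv)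
      · refine Or.inr (fun w hw hwX => hv (hside w hw hwX v C'.start_mem_support))
    have hCsupp : C.support = C'.support := (SimpleGraph.Walk.support_transfer _ _).symm
    rcases hsupp with hsX | hsXc
    · have hcyc2 := isCycle_walkInduce C hC.1 (fun w hw => hsX w (hCsupp ▸ hw))
      exact hT1.IsAcyclic _ hcyc2
    · have hcyc2 := isCycle_walkInduce C hC.1 (fun w hw => hsXc w (hCsupp ▸ hw))
      exact hT2.IsAcyclic _ hcyc2
end
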